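/- Let E be a real inner product space, let U be a finite-dimensional subspace of E, let I be a finite index set and (φ_i)_{i ∈ I} a family of nonzero, pairwise orthogonal vectors of E (⟨φ_i, φ_j⟩ = 0 for i ≠ j), and let x ∈ E. Let u be the orthogonal projection of x onto U and let w be the orthogonal projection of x onto the subspace U + span{φ_i : i ∈ I}. Then ‖x − w‖² ≤ ‖x − u‖² − ∑_{i ∈ I} ⟨x − u, φ_i⟩² / ‖φ_i‖². -/

import Mathlib

open scoped RealInnerProductSpace

/-!
Let `s = ∑ i ∈ I, (⟪x - u, φ i⟫ / ‖φ i‖²) • φ i`. By orthogonality of the `φ i`, both `⟪x - u, s⟫`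
and `‖s‖²` equal `∑ i ∈ I, ⟪x - u, φ i⟫² / ‖φ i‖²`, so `‖x - (u + s)‖²` is the right-hand side.
Since `u + s` lies in `U ⊔ span (φ '' I)` and `x - w` is orthogonal to that subspace, Pythagoras gives
`‖x - w‖² ≤ ‖x - (u + s)‖²`.
-/

section

variable {F : Type*} [NormedAddCommGroup F] [InnerProductSpace ℝ F]

theorem norm_sub_sq_le_of_forall_inner_eq_zero (K : Submodule ℝ F) {x w v : F} (hwK : w ∈ K)
    (hw : ∀ y ∈ K, ⟪x - w, y⟫ = 0) (hvK : v ∈ K) : ‖x - w‖ ^ 2 ≤ ‖x - v‖ ^ 2 := by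
  have hsplit : x - v = (x - w) + (w - v) := by abel
  rw [hsplit, norm_add_sq_real, hw _ (K.sub_mem hwK hvK)]
  nlinarith [sq_nonneg ‖w - v‖]

variable {ι : Type*} {I : Finset ι} {φ : ι → F}

theorem norm_sum_sq_of_pairwise_inner_eq_zero
    (horth : ∀ i ∈ I, ∀ j ∈ I, i ≠ j → ⟪φ i, φ j⟫ = 0) (c : ι → ℝ) :
    ‖∑ i ∈ I, c i • φ i‖ ^ 2 = ∑ i ∈ I, c i ^ 2 * ‖φ i‖ ^ 2 := by
  rw [← real_inner_self_eq_norm_sq, sum_inner]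
  refine Finset.sum_congr rfl fun i hi => ?_
  rw [inner_sum, Finset.sum_eq_single_of_mem i hi fun j hj hji => by
    rw [real_inner_smul_left, real_inner_smul_right, horth i hi j hj hji.symm, mul_zero, mul_zero]]
  rw [real_inner_smul_left, real_inner_smul_right, real_inner_self_eq_norm_sq]
  ring

theorem norm_sub_sum_inner_div_smul_sq
    (horth : ∀ i ∈ I, ∀ j ∈ I, i ≠ j → ⟪φ i, φ j⟫ = 0) (y : F) :
    ‖y - ∑ i ∈ I, (⟪y, φ i⟫ / ‖φ i‖ ^ 2) • φ i‖ ^ 2 =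
      ‖y‖ ^ 2 - ∑ i ∈ I, ⟪y, φ i⟫ ^ 2 / ‖φ i‖ ^ 2 := by
  have hinner : ⟪y, ∑ i ∈ I, (⟪y, φ i⟫ / ‖φ i‖ ^ 2) • φ i⟫ =
      ∑ i ∈ I, ⟪y, φ i⟫ ^ 2 / ‖φ i‖ ^ 2 := by
    simp only [inner_sum, real_inner_smul_right]
    exact Finset.sum_congr rfl fun i _ => by ring
  -- `(a / n) ^ 2 * n = a ^ 2 / n` holds also for `n = 0`, where both sides are the junk value `0`.
  have hnorm : ‖∑ i ∈ I, (⟪y, φ i⟫ / ‖φ i‖ ^ 2) • φ i‖ ^ 2 =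
      ∑ i ∈ I, ⟪y, φ i⟫ ^ 2 / ‖φ i‖ ^ 2 := by
    rw [norm_sum_sq_of_pairwise_inner_eq_zero horth]
    refine Finset.sum_congr rfl fun i _ => ?_
    rcases eq_or_ne (‖φ i‖ ^ 2) 0 with h | h
    · simp [h]
    · field_simp
  rw [norm_sub_sq_real, hinner, hnorm]
  ring

end

theorem stmt_4_general {E : Type*} [NormedAddCommGroup E] [InnerProductSpace ℝ E]
    {ι : Type*} (I : Finset ι)
    (U : Submodule ℝ E)
    (φ : ι → E)
    (horth : ∀ i ∈ I, ∀ j ∈ I, i ≠ j → ⟪φ i, φ j⟫ = 0)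
    (x u w : E)
    (huU : u ∈ U)
    (hwW : w ∈ U ⊔ Submodule.span ℝ (φ '' I))
    (hw : ∀ y ∈ U ⊔ Submodule.span ℝ (φ '' I), ⟪x - w, y⟫ = 0) :
    ‖x - w‖ ^ 2 ≤ ‖x - u‖ ^ 2 - ∑ i ∈ I, ⟪x - u, φ i⟫ ^ 2 / ‖φ i‖ ^ 2 := by
  set s := ∑ i ∈ I, (⟪x - u, φ i⟫ / ‖φ i‖ ^ 2) • φ i
  have hsW : u + s ∈ U ⊔ Submodule.span ℝ (φ '' I) :=
    Submodule.add_mem_sup huU <| Submodule.sum_mem _ fun i hi =>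
      Submodule.smul_mem _ _ (Submodule.subset_span ⟨i, hi, rfl⟩)
  calc ‖x - w‖ ^ 2 ≤ ‖x - (u + s)‖ ^ 2 := norm_sub_sq_le_of_forall_inner_eq_zero _ hwW hw hsW
    _ = ‖(x - u) - s‖ ^ 2 := by rw [sub_add_eq_sub_sub]
    _ = _ := norm_sub_sum_inner_div_smul_sq horth (x - u)

/-- Error reduction when a finite family of nonzero, pairwise orthogonal basis
functions `(φ i)_{i ∈ I}` is added to a finite-dimensional subspace `U` of a
real inner product space: with `u` the orthogonal projection of `x` onto `U`
and `w` the orthogonal projection of `x` onto `U + span{φ i : i ∈ I}` (each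
characterized by membership and orthogonality of the residual), one has
`‖x − w‖² ≤ ‖x − u‖² − ∑_{i ∈ I} ⟪x − u, φ i⟫² / ‖φ i‖²`. -/
theorem stmt_4 {E : Type*} [NormedAddCommGroup E] [InnerProductSpace ℝ E]
    {ι : Type*} (I : Finset ι)
    (U : Submodule ℝ E) [FiniteDimensional ℝ U]
    (φ : ι → E) (hφ : ∀ i ∈ I, φ i ≠ 0)
    (horth : ∀ i ∈ I, ∀ j ∈ I, i ≠ j → ⟪φ i, φ j⟫ = 0)
    (x u w : E)
    (huU : u ∈ U) (hu : ∀ y ∈ U, ⟪x - u, y⟫ = 0)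
    (hwW : w ∈ U ⊔ Submodule.span ℝ (φ '' I))
    (hw : ∀ y ∈ U ⊔ Submodule.span ℝ (φ '' I), ⟪x - w, y⟫ = 0) :
    ‖x - w‖ ^ 2 ≤ ‖x - u‖ ^ 2 - ∑ i ∈ I, ⟪x - u, φ i⟫ ^ 2 / ‖φ i‖ ^ 2 :=
  stmt_4_general I U φ horth x u w huU hwW hw
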